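/- arXiv:1404.7314 — 5 statements merged into one kernel-verified Lean document; each statement's English description precedes it below -/
import Mathlib

section
/- Let (Ω, 𝓕, μ) be a probability space and 𝓖 ⊆ 𝓕 a sub-σ-algebra. Let ξ : Ω → ℝ be integrable, and let H, P, P⁺, P⁻, V̄ : Ω → ℝ be 𝓖-measurable with P > 0, P⁺ > 0 and P⁻ > 0 almost everywhere. Set Y := E[ξ | 𝓖] and F := V̄ − H. Then the one-step recursive pricing equation V̄ = Y + F − max(F,0)·(P/P⁺) − min(F,0)·(P/P⁻) holds μ-almost everywhere if and only if max(V̄ − H, 0) = (P⁺/P)·max(Y − H, 0) and min(V̄ − H, 0) = (P⁻/P)·min(Y − H, 0) hold μ-almost everywhere. -/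
open MeasureTheory

lemma key (v h y p pp pm : ℝ) (hp : 0 < p) (hpp : 0 < pp) (hpm : 0 < pm) :
    (v = y + (v - h) - max (v - h) 0 * (p / pp) - min (v - h) 0 * (p / pm)) ↔
    (max (v - h) 0 = (pp / p) * max (y - h) 0 ∧
     min (v - h) 0 = (pm / p) * min (y - h) 0) := by
  set f := v - h with hf
  constructor
  · intro he
    have hyh : y - h = max f 0 * (p / pp) + min f 0 * (p / pm) := by linarith
    rcases le_or_gt 0 f with h0 | h0
    · have hmax : max f 0 = f := max_eq_left h0
      have hmin : min f 0 = (0:ℝ) := min_eq_right h0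
      rw [hmax, hmin] at hyh
      have hge : 0 ≤ y - h := by
        rw [hyh]; positivity
      have : max (y - h) 0 = y - h := max_eq_left hge
      have : min (y - h) 0 = (0:ℝ) := min_eq_right hge
      constructor
      · rw [hmax, max_eq_left hge, hyh]; field_simp; ring
      · rw [hmin, min_eq_right hge]; ring
    · have hmax : max f 0 = (0:ℝ) := max_eq_right h0.le
      have hmin : min f 0 = f := min_eq_left h0.le
      rw [hmax, hmin] at hyh
      have hle : y - h ≤ 0 := by
        rw [hyh]; simp at hyh ⊢
        exact mul_nonpos_of_nonpos_of_nonneg h0.le (by positivity)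
      constructor
      · rw [hmax, max_eq_right hle]; ring
      · rw [hmin, min_eq_left hle, hyh]; field_simp; ring
  · rintro ⟨h1, h2⟩
    have hsum : y - h = max f 0 * (p / pp) + min f 0 * (p / pm) := by
      have : max (y - h) 0 + min (y - h) 0 = y - h := by rw [max_add_min]; ring
      rw [← this, h1, h2]; field_simp
    linarith

/-- one-step recursive pricing equation without rehypothecation.
With `Y := E[ξ | 𝓖]` and `F := V̄ − H`, the equation
`V̄ = Y + F − F⁺·(P/P⁺) − F⁻·(P/P⁻)` holds a.e. iff
`(V̄ − H)⁺ = (P⁺/P)·(Y − H)⁺` and `(V̄ − H)⁻ = (P⁻/P)·(Y − H)⁻` hold a.e. -/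
theorem stmt_1 {Ω : Type*} {mF : MeasurableSpace Ω} (μ : Measure Ω)
    [IsProbabilityMeasure μ] (mG : MeasurableSpace Ω) (hG : mG ≤ mF)
    (ξ H P Pp Pm V : Ω → ℝ) (hξ : Integrable ξ μ)
    (hH : Measurable[mG] H) (hP : Measurable[mG] P)
    (hPp : Measurable[mG] Pp) (hPm : Measurable[mG] Pm)
    (hV : Measurable[mG] V)
    (hPpos : ∀ᵐ ω ∂μ, 0 < P ω) (hPppos : ∀ᵐ ω ∂μ, 0 < Pp ω)
    (hPmpos : ∀ᵐ ω ∂μ, 0 < Pm ω) :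
    (∀ᵐ ω ∂μ,
        V ω = (μ[ξ|mG]) ω + (V ω - H ω)
            - max (V ω - H ω) 0 * (P ω / Pp ω)
            - min (V ω - H ω) 0 * (P ω / Pm ω)) ↔
    ((∀ᵐ ω ∂μ,
        max (V ω - H ω) 0 = (Pp ω / P ω) * max ((μ[ξ|mG]) ω - H ω) 0) ∧
     (∀ᵐ ω ∂μ,
        min (V ω - H ω) 0 = (Pm ω / P ω) * min ((μ[ξ|mG]) ω - H ω) 0)) := by
  constructor
  · intro he
    constructor
    · filter_upwards [he, hPpos, hPppos, hPmpos] with ω h1 h2 h3 h4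
      exact ((key _ _ _ _ _ _ h2 h3 h4).mp h1).1
    · filter_upwards [he, hPpos, hPppos, hPmpos] with ω h1 h2 h3 h4
      exact ((key _ _ _ _ _ _ h2 h3 h4).mp h1).2
  · rintro ⟨h1, h2⟩
    filter_upwards [h1, h2, hPpos, hPppos, hPmpos] with ω ha hb h2 h3 h4
    exact (key _ _ _ _ _ _ h2 h3 h4).mpr ⟨ha, hb⟩
end

section
/- Let (Ω, 𝓕, μ) be a probability space and 𝓖 ⊆ 𝓕 a sub-σ-algebra. Let ξ : Ω → ℝ be integrable, and let H, C, P, P⁺, P⁻, V̄ : Ω → ℝ be 𝓖-measurable with P > 0, P⁺ > 0 and P⁻ > 0 almost everywhere. Set Y := E[ξ | 𝓖] and F := V̄ − C − H. Then the one-step recursive pricing equation V̄ = Y + F − max(F,0)·(P/P⁺) − min(F,0)·(P/P⁻) holds μ-almost everywhere if and only if max(V̄ − C − H, 0) = (P⁺/P)·max(Y − C − H, 0) and min(V̄ − C − H, 0) = (P⁻/P)·min(Y − C − H, 0) hold μ-almost everywhere. -/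
open MeasureTheory

lemma key_pointwise (v y c h p pp pm : ℝ) (hp : 0 < p) (hpp : 0 < pp) (hpm : 0 < pm) :
    (v = y + (v - c - h) - max (v - c - h) 0 * (p / pp) - min (v - c - h) 0 * (p / pm)) ↔
    (max (v - c - h) 0 = pp / p * max (y - c - h) 0 ∧
     min (v - c - h) 0 = pm / p * min (y - c - h) 0) := by
  have hp' := hp.ne'
  have hpp' := hpp.ne'
  have hpm' := hpm.ne'
  constructor
  · intro hEq
    have hG : y - c - h = max (v - c - h) 0 * (p / pp) + min (v - c - h) 0 * (p / pm) := by
      linarith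
    rcases le_or_gt (v - c - h) 0 with hF | hF
    · have h1 : max (v - c - h) 0 = 0 := max_eq_right hF
      have h2 : min (v - c - h) 0 = v - c - h := min_eq_left hF
      have hGeq : y - c - h = (v - c - h) * (p / pm) := by rw [hG, h1, h2]; ring
      have hGle : y - c - h ≤ 0 := by
        rw [hGeq]; exact mul_nonpos_of_nonpos_of_nonneg hF (div_pos hp hpm).le
      constructor
      · rw [h1, max_eq_right hGle]; ring
      · rw [h2, min_eq_left hGle, hGeq]; field_simp
    · have h1 : max (v - c - h) 0 = v - c - h := max_eq_left hF.le
      have h2 : min (v - c - h) 0 = 0 := min_eq_right hF.le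
      have hGeq : y - c - h = (v - c - h) * (p / pp) := by rw [hG, h1, h2]; ring
      have hGge : 0 ≤ y - c - h := by
        rw [hGeq]; exact mul_nonneg hF.le (div_pos hp hpp).le
      constructor
      · rw [h1, max_eq_left hGge, hGeq]; field_simp
      · rw [h2, min_eq_right hGge]; ring
  · rintro ⟨h1, h2⟩
    have e1 : pp / p * max (y - c - h) 0 * (p / pp) = max (y - c - h) 0 := by field_simp
    have e2 : pm / p * min (y - c - h) 0 * (p / pm) = min (y - c - h) 0 := by field_simp
    rw [h1, h2, e1, e2]
    have := max_add_min (y - c - h) 0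
    linarith

/-- one-step recursive pricing equation with rehypothecation.
With `Y := E[ξ | 𝓖]` and `F := V̄ − C − H`, the equation
`V̄ = Y + F − F⁺·(P/P⁺) − F⁻·(P/P⁻)` holds a.e. iff
`(V̄ − C − H)⁺ = (P⁺/P)·(Y − C − H)⁺` and `(V̄ − C − H)⁻ = (P⁻/P)·(Y − C − H)⁻`
hold a.e. -/
theorem stmt_2 {Ω : Type*} {mF : MeasurableSpace Ω} (μ : Measure Ω)
    [IsProbabilityMeasure μ] (mG : MeasurableSpace Ω) (hG : mG ≤ mF)
    (ξ H C P Pp Pm V : Ω → ℝ) (hξ : Integrable ξ μ)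
    (hH : Measurable[mG] H) (hC : Measurable[mG] C) (hP : Measurable[mG] P)
    (hPp : Measurable[mG] Pp) (hPm : Measurable[mG] Pm)
    (hV : Measurable[mG] V)
    (hPpos : ∀ᵐ ω ∂μ, 0 < P ω) (hPppos : ∀ᵐ ω ∂μ, 0 < Pp ω)
    (hPmpos : ∀ᵐ ω ∂μ, 0 < Pm ω) :
    (∀ᵐ ω ∂μ,
        V ω = (μ[ξ|mG]) ω + (V ω - C ω - H ω)
            - max (V ω - C ω - H ω) 0 * (P ω / Pp ω)
            - min (V ω - C ω - H ω) 0 * (P ω / Pm ω)) ↔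
    ((∀ᵐ ω ∂μ,
        max (V ω - C ω - H ω) 0
          = (Pp ω / P ω) * max ((μ[ξ|mG]) ω - C ω - H ω) 0) ∧
     (∀ᵐ ω ∂μ,
        min (V ω - C ω - H ω) 0
          = (Pm ω / P ω) * min ((μ[ξ|mG]) ω - C ω - H ω) 0)) := by
  constructor
  · intro hEq
    constructor
    · filter_upwards [hEq, hPpos, hPppos, hPmpos] with ω h hp hpp hpm
      exact ((key_pointwise _ _ _ _ _ _ _ hp hpp hpm).mp h).1
    · filter_upwards [hEq, hPpos, hPppos, hPmpos] with ω h hp hpp hpm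
      exact ((key_pointwise _ _ _ _ _ _ _ hp hpp hpm).mp h).2
  · rintro ⟨h1, h2⟩
    filter_upwards [h1, h2, hPpos, hPppos, hPmpos] with ω e1 e2 hp hpp hpm
    exact (key_pointwise _ _ _ _ _ _ _ hp hpp hpm).mpr ⟨e1, e2⟩
end

section
/- Let (Ω, 𝓕, μ) be a probability space and 𝓖 ⊆ 𝓕 a sub-σ-algebra. Let ξ : Ω → ℝ be integrable, and let H, P, P⁺, P⁻ : Ω → ℝ be 𝓖-measurable with P > 0, P⁺ > 0 and P⁻ > 0 almost everywhere. Then there exists a 𝓖-measurable V̄ : Ω → ℝ, unique up to μ-almost-everywhere equality, satisfying the one-step recursive pricing equation V̄ = E[ξ | 𝓖] + F − max(F,0)·(P/P⁺) − min(F,0)·(P/P⁻) μ-almost everywhere, where F := V̄ − H; it is given explicitly by V̄ = H + (P⁺/P)·max(E[ξ | 𝓖] − H, 0) + (P⁻/P)·min(E[ξ | 𝓖] − H, 0). -/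
open MeasureTheory

private lemma pricing_inj {c c' x y : ℝ} (hc : 0 < c) (hc' : 0 < c')
    (h : max x 0 * c + min x 0 * c' = max y 0 * c + min y 0 * c') : x = y := by
  rcases le_or_gt x 0 with hx | hx <;> rcases le_or_gt y 0 with hy | hy
  · simp only [max_eq_right hx, max_eq_right hy, min_eq_left hx, min_eq_left hy,
      zero_mul, zero_add] at h
    exact mul_right_cancel₀ hc'.ne' h
  · simp only [max_eq_right hx, min_eq_left hx, max_eq_left hy.le, min_eq_right hy.le,
      zero_mul, zero_add, add_zero] at h
    nlinarith
  · simp only [max_eq_right hy, min_eq_left hy, max_eq_left hx.le, min_eq_right hx.le,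
      zero_mul, zero_add, add_zero] at h
    nlinarith
  · simp only [max_eq_left hx.le, min_eq_right hx.le, max_eq_left hy.le, min_eq_right hy.le,
      zero_mul, add_zero] at h
    exact mul_right_cancel₀ hc.ne' h

private lemma pricing_sol {p pp pm d : ℝ} (hp : 0 < p) (hpp : 0 < pp) (hpm : 0 < pm) :
    max (pp / p * max d 0 + pm / p * min d 0) 0 * (p / pp)
      + min (pp / p * max d 0 + pm / p * min d 0) 0 * (p / pm) = d := by
  have hkp : 0 < pp / p := div_pos hpp hp
  have hkm : 0 < pm / p := div_pos hpm hp
  rcases le_or_gt d 0 with hd | hd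
  · have h1 : max d 0 = 0 := max_eq_right hd
    have h2 : min d 0 = d := min_eq_left hd
    rw [h1, h2]
    have hF : pp / p * 0 + pm / p * d ≤ 0 := by nlinarith
    rw [max_eq_right hF, min_eq_left hF, zero_mul, zero_add, mul_zero, zero_add]
    field_simp
  · have h1 : max d 0 = d := max_eq_left hd.le
    have h2 : min d 0 = 0 := min_eq_right hd.le
    rw [h1, h2]
    have hF : 0 ≤ pp / p * d + pm / p * 0 := by nlinarith
    rw [max_eq_left hF, min_eq_right hF, zero_mul, add_zero, mul_zero, add_zero]
    field_simp

/-- existence and a.e.-uniqueness of a `𝓖`-measurable solution `V̄`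
of the one-step recursive pricing equation
`V̄ = E[ξ|𝓖] + F − F⁺·(P/P⁺) − F⁻·(P/P⁻)` with `F := V̄ − H`, explicitly given by
`V̄ = H + (P⁺/P)·(E[ξ|𝓖] − H)⁺ + (P⁻/P)·(E[ξ|𝓖] − H)⁻`. -/
theorem stmt_3 {Ω : Type*} {mF : MeasurableSpace Ω} (μ : Measure Ω)
    [IsProbabilityMeasure μ] (mG : MeasurableSpace Ω) (hG : mG ≤ mF)
    (ξ H P Pp Pm : Ω → ℝ) (hξ : Integrable ξ μ)
    (hH : Measurable[mG] H) (hP : Measurable[mG] P)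
    (hPp : Measurable[mG] Pp) (hPm : Measurable[mG] Pm)
    (hPpos : ∀ᵐ ω ∂μ, 0 < P ω) (hPppos : ∀ᵐ ω ∂μ, 0 < Pp ω)
    (hPmpos : ∀ᵐ ω ∂μ, 0 < Pm ω) :
    ∃ V : Ω → ℝ, Measurable[mG] V ∧
      (∀ᵐ ω ∂μ,
        V ω = (μ[ξ|mG]) ω + (V ω - H ω)
            - max (V ω - H ω) 0 * (P ω / Pp ω)
            - min (V ω - H ω) 0 * (P ω / Pm ω)) ∧
      (∀ᵐ ω ∂μ,
        V ω = H ω + (Pp ω / P ω) * max ((μ[ξ|mG]) ω - H ω) 0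
            + (Pm ω / P ω) * min ((μ[ξ|mG]) ω - H ω) 0) ∧
      (∀ V' : Ω → ℝ, Measurable[mG] V' →
        (∀ᵐ ω ∂μ,
          V' ω = (μ[ξ|mG]) ω + (V' ω - H ω)
              - max (V' ω - H ω) 0 * (P ω / Pp ω)
              - min (V' ω - H ω) 0 * (P ω / Pm ω)) →
        V' =ᵐ[μ] V) := by
  set E : Ω → ℝ := μ[ξ|mG] with hE
  have hEmeas : Measurable[mG] E := stronglyMeasurable_condExp.measurable
  set V : Ω → ℝ := fun ω =>
    H ω + (Pp ω / P ω) * max (E ω - H ω) 0 + (Pm ω / P ω) * min (E ω - H ω) 0 with hV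
  have hVmeas : Measurable[mG] V := by
    apply Measurable.add
    apply Measurable.add hH
    · exact ((hPp.div hP).mul ((hEmeas.sub hH).max measurable_const))
    · exact ((hPm.div hP).mul ((hEmeas.sub hH).min measurable_const))
  refine ⟨V, hVmeas, ?_, ?_, ?_⟩
  · filter_upwards [hPpos, hPppos, hPmpos] with ω hp hpp hpm
    have key := pricing_sol (d := E ω - H ω) hp hpp hpm
    have hVω : V ω - H ω = Pp ω / P ω * max (E ω - H ω) 0 + Pm ω / P ω * min (E ω - H ω) 0 := by
      simp [hV]; ring
    rw [← hVω] at key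
    linarith
  · filter_upwards with ω; rfl
  · intro V' hV'meas hV'eq
    filter_upwards [hPpos, hPppos, hPmpos, hV'eq] with ω hp hpp hpm heq
    have hcp : 0 < P ω / Pp ω := div_pos hp hpp
    have hcm : 0 < P ω / Pm ω := div_pos hp hpm
    have h1 : max (V' ω - H ω) 0 * (P ω / Pp ω) + min (V' ω - H ω) 0 * (P ω / Pm ω)
        = E ω - H ω := by linarith
    have h2 : max (V ω - H ω) 0 * (P ω / Pp ω) + min (V ω - H ω) 0 * (P ω / Pm ω)
        = E ω - H ω := by
      have hVω : V ω - H ω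
          = Pp ω / P ω * max (E ω - H ω) 0 + Pm ω / P ω * min (E ω - H ω) 0 := by
        simp [hV]; ring
      rw [hVω]
      exact pricing_sol hp hpp hpm
    have := pricing_inj hcp hcm (h1.trans h2.symm)
    linarith
end

section
/- Let (Ω, 𝓕, μ) be a probability space, let τ_I, τ_C : Ω → ℝ be measurable with τ_I ≠ τ_C almost everywhere, and let ε, C, D : Ω → ℝ be measurable with D ≥ 0. Fix nonnegative constants LGD_C, LGD'_C, LGD_I, LGD'_I and times t < T. Define the on-default cash flow θ := 1_{τ_C < τ_I}·(ε − LGD_C·max(max(ε,0) − max(C,0), 0) − LGD'_C·max(min(ε,0) − min(C,0), 0)) + 1_{τ_I < τ_C}·(ε − LGD_I·min(min(ε,0) − min(C,0), 0) − LGD'_I·min(max(ε,0) − max(C,0), 0)), and set Π_CVA := LGD_C·max(max(ε,0) − max(C,0), 0) + LGD'_C·max(min(ε,0) − min(C,0), 0) and Π_DVA := −(LGD_I·min(min(ε,0) − min(C,0), 0) + LGD'_I·min(max(ε,0) − max(C,0), 0)). Let A := {ω : t < min(τ_I(ω), τ_C(ω)) < T}. If 1_A·D·ε, 1_A·D·Π_CVA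 and 1_A·D·Π_DVA are integrable, then E[1_A·D·θ] = E[1_A·D·ε] − E[1_A·1_{τ_C < τ_I}·D·Π_CVA] + E[1_A·1_{τ_I < τ_C}·D·Π_DVA]. -/
open MeasureTheory

/-- decomposition of the price of the discounted on-default cash
flow into the discounted close-out amount minus collateralized CVA plus
collateralized DVA. -/
theorem stmt_5 {Ω : Type*} [MeasurableSpace Ω] (μ : Measure Ω)
    [IsProbabilityMeasure μ]
    (τI τC ε C D : Ω → ℝ)
    (hτI : Measurable τI) (hτC : Measurable τC) (hε : Measurable ε)
    (hC : Measurable C) (hD : Measurable D)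
    (hDpos : ∀ ω, 0 ≤ D ω)
    (hne : ∀ᵐ ω ∂μ, τI ω ≠ τC ω)
    (LGDC LGDC' LGDI LGDI' t T : ℝ)
    (hLGDC : 0 ≤ LGDC) (hLGDC' : 0 ≤ LGDC')
    (hLGDI : 0 ≤ LGDI) (hLGDI' : 0 ≤ LGDI')
    (htT : t < T)
    (θ PiCVA PiDVA : Ω → ℝ)
    (hθ : ∀ ω, θ ω =
      (if τC ω < τI ω then
        ε ω - LGDC * max (max (ε ω) 0 - max (C ω) 0) 0
            - LGDC' * max (min (ε ω) 0 - min (C ω) 0) 0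
       else 0) +
      (if τI ω < τC ω then
        ε ω - LGDI * min (min (ε ω) 0 - min (C ω) 0) 0
            - LGDI' * min (max (ε ω) 0 - max (C ω) 0) 0
       else 0))
    (hPiCVA : ∀ ω, PiCVA ω =
      LGDC * max (max (ε ω) 0 - max (C ω) 0) 0
        + LGDC' * max (min (ε ω) 0 - min (C ω) 0) 0)
    (hPiDVA : ∀ ω, PiDVA ω =
      -(LGDI * min (min (ε ω) 0 - min (C ω) 0) 0
        + LGDI' * min (max (ε ω) 0 - max (C ω) 0) 0))
    (A : Set Ω)
    (hA : A = {ω | t < min (τI ω) (τC ω) ∧ min (τI ω) (τC ω) < T})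
    (hint1 : Integrable (A.indicator fun ω => D ω * ε ω) μ)
    (hint2 : Integrable (A.indicator fun ω => D ω * PiCVA ω) μ)
    (hint3 : Integrable (A.indicator fun ω => D ω * PiDVA ω) μ) :
    ∫ ω, A.indicator (fun ω => D ω * θ ω) ω ∂μ
      = ∫ ω, A.indicator (fun ω => D ω * ε ω) ω ∂μ
        - ∫ ω, A.indicator
            (fun ω => (if τC ω < τI ω then (1 : ℝ) else 0) * D ω * PiCVA ω) ω ∂μ
        + ∫ ω, A.indicator
            (fun ω => (if τI ω < τC ω then (1 : ℝ) else 0) * D ω * PiDVA ω) ω ∂μ := by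
  have hPCeq : PiCVA = fun ω => LGDC * max (max (ε ω) 0 - max (C ω) 0) 0
      + LGDC' * max (min (ε ω) 0 - min (C ω) 0) 0 := funext hPiCVA
  have hPDeq : PiDVA = fun ω => -(LGDI * min (min (ε ω) 0 - min (C ω) 0) 0
      + LGDI' * min (max (ε ω) 0 - max (C ω) 0) 0) := funext hPiDVA
  have hmPC : Measurable PiCVA := by
    rw [hPCeq]
    exact ((hε.max measurable_const |>.sub (hC.max measurable_const) |>.max measurable_const
      |>.const_mul LGDC).add
      (hε.min measurable_const |>.sub (hC.min measurable_const) |>.max measurable_const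
        |>.const_mul LGDC'))
  have hmPD : Measurable PiDVA := by
    rw [hPDeq]
    exact ((hε.min measurable_const |>.sub (hC.min measurable_const) |>.min measurable_const
      |>.const_mul LGDI).add
      (hε.max measurable_const |>.sub (hC.max measurable_const) |>.min measurable_const
        |>.const_mul LGDI')).neg
  have hAm : MeasurableSet A := by
    rw [hA]
    exact (measurableSet_lt measurable_const (hτI.min hτC)).inter
      (measurableSet_lt (hτI.min hτC) measurable_const)
  have hPCnn : ∀ ω, 0 ≤ PiCVA ω := fun ω => by rw [hPiCVA]; positivity
  have hPDnn : ∀ ω, 0 ≤ PiDVA ω := fun ω => by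
    rw [hPiDVA]
    have h1 : min (min (ε ω) 0 - min (C ω) 0) 0 ≤ 0 := min_le_right _ _
    have h2 : min (max (ε ω) 0 - max (C ω) 0) 0 ≤ 0 := min_le_right _ _
    nlinarith
  set f1 := A.indicator fun ω => D ω * ε ω with hf1
  set f2 := A.indicator fun ω => (if τC ω < τI ω then (1 : ℝ) else 0) * D ω * PiCVA ω with hf2
  set f3 := A.indicator fun ω => (if τI ω < τC ω then (1 : ℝ) else 0) * D ω * PiDVA ω with hf3
  have hm2 : AEStronglyMeasurable f2 μ :=
    (Measurable.indicator (((Measurable.ite (measurableSet_lt hτC hτI) measurable_const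
      measurable_const).mul hD).mul hmPC) hAm).aestronglyMeasurable
  have hm3 : AEStronglyMeasurable f3 μ :=
    (Measurable.indicator (((Measurable.ite (measurableSet_lt hτI hτC) measurable_const
      measurable_const).mul hD).mul hmPD) hAm).aestronglyMeasurable
  have hi2 : Integrable f2 μ := by
    refine hint2.mono' hm2 (Filter.Eventually.of_forall fun ω => ?_)
    simp only [hf2, Set.indicator]
    by_cases h : ω ∈ A <;>
      simp [h, abs_mul, abs_of_nonneg (hDpos ω), abs_of_nonneg (hPCnn ω)]
    rcases lt_or_ge (τC ω) (τI ω) with h' | h' <;>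
      simp [h', not_lt.mpr, mul_nonneg (hDpos ω) (hPCnn ω), abs_mul,
        abs_of_nonneg (hDpos ω), abs_of_nonneg (hPCnn ω)]
  have hi3 : Integrable f3 μ := by
    refine hint3.mono' hm3 (Filter.Eventually.of_forall fun ω => ?_)
    simp only [hf3, Set.indicator]
    by_cases h : ω ∈ A <;>
      simp [h, abs_mul, abs_of_nonneg (hDpos ω), abs_of_nonneg (hPDnn ω)]
    rcases lt_or_ge (τI ω) (τC ω) with h' | h' <;>
      simp [h', not_lt.mpr, mul_nonneg (hDpos ω) (hPDnn ω), abs_mul,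
        abs_of_nonneg (hDpos ω), abs_of_nonneg (hPDnn ω)]
  have key : ∀ᵐ ω ∂μ, A.indicator (fun ω => D ω * θ ω) ω = f1 ω - f2 ω + f3 ω := by
    filter_upwards [hne] with ω hω
    simp only [hf1, hf2, hf3, Set.indicator]
    by_cases h : ω ∈ A <;> simp [h]
    rw [hθ ω, hPiCVA ω, hPiDVA ω]
    rcases lt_trichotomy (τC ω) (τI ω) with h1 | h1 | h1
    · simp [h1, not_lt.mpr h1.le, asymm h1]; ring
    · exact absurd h1.symm hω
    · simp [h1, not_lt.mpr h1.le, asymm h1]; ring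
  rw [integral_congr_ae key]
  have hadd := integral_add (hint1.sub hi2) hi3
  simp only [Pi.add_apply, Pi.sub_apply] at hadd
  rw [hadd, integral_sub hint1 hi2]
end

section
/- Let (Ω, 𝓕, μ) be a probability space with a filtration (𝓕_n)_{n ∈ ℕ}, let T ∈ ℕ, let π : ℕ → Ω → ℝ be such that π_s is integrable for every s ≤ T, and let τ : Ω → ℕ be a stopping time with respect to (𝓕_n). For each n ≤ T define the fair value V_n := E[∑_{s=n+1}^{T} π_s | 𝓕_n]. Then E[∑_{s=1}^{min(τ,T)} π_s + 1_{τ ≤ T}·V_{min(τ,T)}] = E[∑_{s=1}^{T} π_s], i.e. the expected value of the cash flows received up to the first-default time together with a risk-free close-out payment of the fair value V_τ at default (with full recovery) equals the expected value of all the cash flows of the deal. -/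
/-!
Writing `R n := ∑_{s=n+1}^{T} π_s` for the cash flows still outstanding after time `n`, the
payoff of the defaultable deal is pointwise the full sum `∑_{s=1}^{T} π_s` plus the correction
`1_{τ ≤ T} (V_τ - R_τ)`. On each event `{τ = n}`, which lies in `𝓕 n`, the correction is
`V_n - R_n` with `V_n = E[R_n | 𝓕 n]`, so its integral over that event vanishes by the defining
property of conditional expectation; summing over `n ≤ T` kills the whole correction.
-/

open MeasureTheory Finset

theorem Finset.sum_Icc_one_add_sum_Icc_succ {M : Type*} [AddCommMonoid M] (f : ℕ → M)
    {n T : ℕ} (hn : n ≤ T) :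
    ∑ s ∈ Icc 1 n, f s + ∑ s ∈ Icc (n + 1) T, f s = ∑ s ∈ Icc 1 T, f s := by
  have hIcc_one : ∀ m, Icc 1 m = Ioc 0 m := Icc_add_one_left_eq_Ioc 0
  rw [hIcc_one, hIcc_one, Icc_add_one_left_eq_Ioc]
  exact sum_Ioc_consecutive f n.zero_le hn

theorem ite_le_eq_sum_indicator {Ω M : Type*} [AddCommMonoid M] (τ : Ω → ℕ) (T : ℕ)
    (g : ℕ → Ω → M) (ω : Ω) :
    (if τ ω ≤ T then g (τ ω) ω else 0)
      = ∑ n ∈ range (T + 1), {ω | τ ω = n}.indicator (g n) ω := by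
  simp [Set.indicator_apply]

theorem integral_indicator_condExp_sub_eq_zero {Ω E : Type*} [NormedAddCommGroup E]
    [NormedSpace ℝ E] [CompleteSpace E] {m m₀ : MeasurableSpace Ω} {μ : Measure Ω} (hm : m ≤ m₀)
    [SigmaFinite (μ.trim hm)] {f : Ω → E} (hf : Integrable f μ) {s : Set Ω}
    (hs : MeasurableSet[m] s) :
    ∫ ω, s.indicator (μ[f | m] - f) ω ∂μ = 0 := by
  rw [integral_indicator (hm s hs), Pi.sub_def,
    integral_sub integrable_condExp.integrableOn hf.integrableOn, setIntegral_condExp hm hf hs,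
    sub_self]

section StoppedCondExp

variable {Ω E : Type*} [NormedAddCommGroup E] [NormedSpace ℝ E] [CompleteSpace E]
  {m₀ : MeasurableSpace Ω} {μ : Measure Ω} {𝓕 : Filtration ℕ m₀} {τ : Ω → ℕ} {T : ℕ}
  {R : ℕ → Ω → E}

theorem MeasureTheory.IsStoppingTime.measurableSet_eq_coe
    (hτ : IsStoppingTime 𝓕 (fun ω => (τ ω : WithTop ℕ))) (n : ℕ) :
    MeasurableSet[𝓕 n] {ω | τ ω = n} := by
  simpa using hτ.measurableSet_eq n

theorem integrable_indicator_stoppingTime_eq_condExp_sub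
    (hτ : IsStoppingTime 𝓕 (fun ω => (τ ω : WithTop ℕ))) {n : ℕ} (hRn : Integrable (R n) μ) :
    Integrable ({ω | τ ω = n}.indicator (μ[R n | 𝓕 n] - R n)) μ :=
  (integrable_condExp.sub hRn).indicator (𝓕.le n _ (hτ.measurableSet_eq_coe n))

theorem integrable_ite_stoppingTime_condExp_sub
    (hτ : IsStoppingTime 𝓕 (fun ω => (τ ω : WithTop ℕ))) (hR : ∀ n ≤ T, Integrable (R n) μ) :
    Integrable (fun ω => if τ ω ≤ T then (μ[R (τ ω) | 𝓕 (τ ω)] - R (τ ω)) ω else 0) μ := by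
  refine (integrable_finsetSum (range (T + 1)) fun n hn => ?_).congr
    (.of_forall fun ω => (ite_le_eq_sum_indicator τ T (fun n => μ[R n | 𝓕 n] - R n) ω).symm)
  exact integrable_indicator_stoppingTime_eq_condExp_sub hτ (hR n (mem_range_succ_iff.mp hn))

theorem integral_ite_stoppingTime_condExp_sub [SigmaFiniteFiltration μ 𝓕]
    (hτ : IsStoppingTime 𝓕 (fun ω => (τ ω : WithTop ℕ))) (hR : ∀ n ≤ T, Integrable (R n) μ) :
    ∫ ω, (if τ ω ≤ T then (μ[R (τ ω) | 𝓕 (τ ω)] - R (τ ω)) ω else 0) ∂μ = 0 := by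
  rw [integral_congr_ae (.of_forall
    (ite_le_eq_sum_indicator τ T fun n => μ[R n | 𝓕 n] - R n)), integral_finsetSum]
  · exact sum_eq_zero fun n hn => integral_indicator_condExp_sub_eq_zero (𝓕.le n)
      (hR n (mem_range_succ_iff.mp hn)) (hτ.measurableSet_eq_coe n)
  · exact fun n hn => integrable_indicator_stoppingTime_eq_condExp_sub hτ
      (hR n (mem_range_succ_iff.mp hn))

end StoppedCondExp

/-- under a risk-free close-out at the fair value with full
recovery, the expected value of the cash flows up to the first-default time
plus the close-out payment equals the expected value of all the cash flows. -/
theorem stmt_7 {Ω : Type*} {mF : MeasurableSpace Ω} (μ : Measure Ω)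
    [IsProbabilityMeasure μ] (𝓕 : Filtration ℕ mF) (T : ℕ)
    (π : ℕ → Ω → ℝ) (hπ : ∀ s ≤ T, Integrable (π s) μ)
    (τ : Ω → ℕ) (hτ : IsStoppingTime 𝓕 (fun ω => (τ ω : WithTop ℕ)))
    (V : ℕ → Ω → ℝ)
    (hV : ∀ n ≤ T, V n = μ[fun ω => ∑ s ∈ Finset.Icc (n + 1) T, π s ω | 𝓕 n]) :
    ∫ ω, ((∑ s ∈ Finset.Icc 1 (min (τ ω) T), π s ω)
        + if τ ω ≤ T then V (min (τ ω) T) ω else 0) ∂μ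
      = ∫ ω, ∑ s ∈ Finset.Icc 1 T, π s ω ∂μ := by
  set R : ℕ → Ω → ℝ := fun n ω => ∑ s ∈ Icc (n + 1) T, π s ω
  have hR : ∀ n ≤ T, Integrable (R n) μ := fun n _ =>
    integrable_finsetSum _ fun s hs => hπ s (mem_Icc.mp hs).2
  have hpayoff : ∀ ω, (∑ s ∈ Icc 1 (min (τ ω) T), π s ω)
        + (if τ ω ≤ T then V (min (τ ω) T) ω else 0)
      = ∑ s ∈ Icc 1 T, π s ω
        + if τ ω ≤ T then (μ[R (τ ω) | 𝓕 (τ ω)] - R (τ ω)) ω else 0 := by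
    intro ω
    split_ifs with hτT
    · rw [min_eq_left hτT, hV _ hτT, ← Finset.sum_Icc_one_add_sum_Icc_succ _ hτT]
      simp only [Pi.sub_apply, R]
      ring
    · rw [min_eq_right (not_le.mp hτT).le]
  rw [integral_congr_ae (.of_forall hpayoff),
    integral_add (hR 0 T.zero_le) (integrable_ite_stoppingTime_condExp_sub hτ hR),
    integral_ite_stoppingTime_condExp_sub hτ hR, add_zero]
end
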